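/- The rewriting system on the free semigroup F on S ∪ Γ with rules (γ₁,γ₂) → (γ₁), (x,γ,y) → (x γ y), (x,y) → (x γ₀ y) is locally confluent, and hence (being terminating) confluent. -/
import Mathlib


open FreeSemigroup

section GammaSemigroup

variable {S Γ : Type}

/-- One-step rewriting on words over S ⊕ Γ. -/
inductive GStep (m : S → Γ → S → S) (γ₀ : Γ) : List (S ⊕ Γ) → List (S ⊕ Γ) → Prop
  | gg (u v : List (S ⊕ Γ)) (γ₁ γ₂ : Γ) :
      GStep m γ₀ (u ++ Sum.inr γ₁ :: Sum.inr γ₂ :: v) (u ++ Sum.inr γ₁ :: v)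
  | xgy (u v : List (S ⊕ Γ)) (x : S) (γ : Γ) (y : S) :
      GStep m γ₀ (u ++ Sum.inl x :: Sum.inr γ :: Sum.inl y :: v) (u ++ Sum.inl (m x γ y) :: v)
  | xy (u v : List (S ⊕ Γ)) (x y : S) :
      GStep m γ₀ (u ++ Sum.inl x :: Sum.inl y :: v) (u ++ Sum.inl (m x γ₀ y) :: v)

/-- The defining relations on the free semigroup on S ⊕ Γ. -/
def GRel (m : S → Γ → S → S) (γ₀ : Γ) :
    FreeSemigroup (S ⊕ Γ) → FreeSemigroup (S ⊕ Γ) → Prop :=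
  fun a b =>
    (∃ γ₁ γ₂ : Γ, a = of (Sum.inr γ₁) * of (Sum.inr γ₂) ∧ b = of (Sum.inr γ₁)) ∨
    (∃ (x y : S) (γ : Γ), a = of (Sum.inl x) * of (Sum.inr γ) * of (Sum.inl y) ∧
      b = of (Sum.inl (m x γ y))) ∨
    (∃ x y : S, a = of (Sum.inl x) * of (Sum.inl y) ∧ b = of (Sum.inl (m x γ₀ y)))

/-- The congruence generated by the defining relations. -/
def GCon (m : S → Γ → S → S) (γ₀ : Γ) : Con (FreeSemigroup (S ⊕ Γ)) := conGen (GRel m γ₀)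

/-- The universal semigroup Σ of the Γ-semigroup S. -/
abbrev USem (m : S → Γ → S → S) (γ₀ : Γ) := (GCon m γ₀).Quotient

/-- The canonical map μ : S → Σ. -/
def gmu (m : S → Γ → S → S) (γ₀ : Γ) (x : S) : USem m γ₀ :=
  ((of (Sum.inl x) : FreeSemigroup (S ⊕ Γ)) : (GCon m γ₀).Quotient)

/-- The canonical map Γ → Σ. -/
def giota (m : S → Γ → S → S) (γ₀ : Γ) (γ : Γ) : USem m γ₀ :=
  ((of (Sum.inr γ) : FreeSemigroup (S ⊕ Γ)) : (GCon m γ₀).Quotient)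

/-- Principal left ideal of an element of a semigroup. -/
def pLeft {T : Type} [Semigroup T] (a : T) : Set T := {w | ∃ t : T, w = t * a} ∪ {a}

/-- Principal right ideal of an element of a semigroup. -/
def pRight {T : Type} [Semigroup T] (a : T) : Set T := {w | ∃ t : T, w = a * t} ∪ {a}

/-- Principal left ideal in the Γ-semigroup: SΓx ∪ {x}. -/
def pLeftG (m : S → Γ → S → S) (x : S) : Set S := {y | ∃ (s : S) (γ : Γ), y = m s γ x} ∪ {x}

/-- Principal right ideal in the Γ-semigroup: xΓS ∪ {x}. -/
def pRightG (m : S → Γ → S → S) (x : S) : Set S := {y | ∃ (γ : Γ) (s : S), y = m x γ s} ∪ {x}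

/-- Green's H relation on the Γ-semigroup. -/
def HrelG (m : S → Γ → S → S) (a b : S) : Prop := pLeftG m a = pLeftG m b ∧ pRightG m a = pRightG m b

/-- S_δ is a simple semigroup: its only two-sided ideal is S itself. -/
def SimpleAt (m : S → Γ → S → S) (δ : Γ) : Prop :=
  ∀ J : Set S, J.Nonempty → (∀ t : S, ∀ j ∈ J, m t δ j ∈ J ∧ m j δ t ∈ J) → J = Set.univ

/-- e is an idempotent of S_δ. -/
def IdemAt (m : S → Γ → S → S) (δ : Γ) (e : S) : Prop := m e δ e = e

/-- e is a primitive idempotent of S_δ. -/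
def PrimAt (m : S → Γ → S → S) (δ : Γ) (e : S) : Prop :=
  IdemAt m δ e ∧ ∀ f, IdemAt m δ f → m e δ f = f → m f δ e = f → f = e

/-- S_δ is completely simple. -/
def CSimpleAt (m : S → Γ → S → S) (δ : Γ) : Prop := SimpleAt m δ ∧ ∃ e, PrimAt m δ e

/-- S_δ has no zero element. -/
def NoZeroAt (m : S → Γ → S → S) (δ : Γ) : Prop := ¬ ∃ z : S, ∀ t : S, m z δ t = z ∧ m t δ z = z

/-- L is a left ideal of S_δ. -/
def LIdealAt (m : S → Γ → S → S) (δ : Γ) (L : Set S) : Prop :=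
  L.Nonempty ∧ ∀ t : S, ∀ l ∈ L, m t δ l ∈ L

/-- L is a minimal left ideal of S_δ. -/
def MinLIdealAt (m : S → Γ → S → S) (δ : Γ) (L : Set S) : Prop :=
  LIdealAt m δ L ∧ ∀ L' ⊆ L, LIdealAt m δ L' → L' = L

/-- S_δ is a group. -/
def GroupAt (m : S → Γ → S → S) (δ : Γ) : Prop :=
  ∃ e : S, (∀ a, m e δ a = a ∧ m a δ e = a) ∧ ∀ a, ∃ b, m a δ b = e ∧ m b δ a = e

/-- G is a subgroup (a sub-semigroup that is a group) of the semigroup T. -/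
def IsSubgroupOf {T : Type} [Semigroup T] (G : Set T) : Prop :=
  (∀ a ∈ G, ∀ b ∈ G, a * b ∈ G) ∧
  ∃ e ∈ G, (∀ g ∈ G, e * g = g ∧ g * e = g) ∧ ∀ g ∈ G, ∃ h ∈ G, g * h = e ∧ h * g = e

/-- The set Σ' = Σ \ Γ. -/
def USem' (m : S → Γ → S → S) (γ₀ : Γ) : Set (USem m γ₀) := {w | ¬ ∃ γ : Γ, w = giota m γ₀ γ}

end GammaSemigroup

section GConfluence

variable {S Γ : Type} {m : S → Γ → S → S} {γ₀ : Γ}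

/-- The three rewrite rules, without context. -/
inductive GRule (m : S → Γ → S → S) (γ₀ : Γ) : List (S ⊕ Γ) → List (S ⊕ Γ) → Prop
  | gg (γ₁ γ₂ : Γ) : GRule m γ₀ [Sum.inr γ₁, Sum.inr γ₂] [Sum.inr γ₁]
  | xgy (x : S) (γ : Γ) (y : S) :
      GRule m γ₀ [Sum.inl x, Sum.inr γ, Sum.inl y] [Sum.inl (m x γ y)]
  | xy (x y : S) : GRule m γ₀ [Sum.inl x, Sum.inl y] [Sum.inl (m x γ₀ y)]

lemma rule_step {p q : List (S ⊕ Γ)} (h : GRule m γ₀ p q) (u v : List (S ⊕ Γ)) :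
    GStep m γ₀ (u ++ p ++ v) (u ++ q ++ v) := by
  cases h with
  | gg γ₁ γ₂ => simpa using GStep.gg u v γ₁ γ₂
  | xgy x γ y => simpa using GStep.xgy u v x γ y
  | xy x y => simpa using GStep.xy u v x y

lemma gstep_cases {w w' : List (S ⊕ Γ)} (h : GStep m γ₀ w w') :
    ∃ u p q v, GRule m γ₀ p q ∧ w = u ++ p ++ v ∧ w' = u ++ q ++ v := by
  cases h with
  | gg u v γ₁ γ₂ => exact ⟨u, _, _, v, .gg γ₁ γ₂, by simp, by simp⟩
  | xgy u v x γ y => exact ⟨u, _, _, v, .xgy x γ y, by simp, by simp⟩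
  | xy u v x y => exact ⟨u, _, _, v, .xy x y, by simp, by simp⟩

lemma gstep_loc_aux (assoc : ∀ (a b c : S) (α β : Γ), m (m a α b) β c = m a α (m b β c))
    {p q p' q' : List (S ⊕ Γ)} (r : GRule m γ₀ p q) (r' : GRule m γ₀ p' q')
    (u : List (S ⊕ Γ)) {s v v' : List (S ⊕ Γ)}
    (hpv : p ++ v = s ++ (p' ++ v')) :
    ∃ c, Relation.ReflTransGen (GStep m γ₀) (u ++ q ++ v) c ∧
      Relation.ReflTransGen (GStep m γ₀) ((u ++ s) ++ q' ++ v') c := by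
  rcases List.append_eq_append_iff.mp hpv with ⟨t, rfl, hv⟩ | ⟨c', hp, hc⟩
  · -- fully disjoint: v = t ++ (p' ++ v')
    subst hv
    refine ⟨u ++ q ++ t ++ q' ++ v',
      .single (by simpa [List.append_assoc] using rule_step r' (u ++ q ++ t) v'),
      .single (by simpa [List.append_assoc] using rule_step r u (t ++ q' ++ v'))⟩
  · rcases c' with _ | ⟨a, c''⟩
    · -- adjacent disjoint : p' ++ v' = v
      simp only [List.nil_append] at hc
      simp only [List.append_nil] at hp
      subst hp; subst hc
      refine ⟨u ++ q ++ q' ++ v',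
        .single (by simpa [List.append_assoc] using rule_step r' (u ++ q) v'),
        .single (by simpa [List.append_assoc] using rule_step r u (q' ++ v'))⟩
    · -- genuine overlap
      cases r with
      | gg γ₁ γ₂ =>
        rcases s with _ | ⟨a₁, s⟩
        · simp only [List.nil_append, List.cons.injEq] at hp
          obtain ⟨rfl, rfl⟩ := hp
          cases r' with
          | gg b₁ b₂ =>
            simp only [List.cons_append, List.nil_append, List.cons.injEq,
              Sum.inr.injEq] at hc
            obtain ⟨rfl, rfl, rfl⟩ := hc
            exact ⟨_, .refl, by simpa using Relation.ReflTransGen.refl⟩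
          | xgy b₁ γ' b₂ => simp at hc
          | xy b₁ b₂ => simp at hc
        · simp only [List.cons_append, List.cons.injEq] at hp
          obtain ⟨rfl, hp2⟩ := hp
          rcases s with _ | ⟨a₂, s⟩
          · simp only [List.nil_append, List.cons.injEq] at hp2
            obtain ⟨rfl, rfl⟩ := hp2
            cases r' with
            | gg b γ₃ =>
              simp only [List.cons_append, List.nil_append, List.cons.injEq,
                Sum.inr.injEq] at hc
              obtain ⟨rfl, rfl⟩ := hc
              exact ⟨u ++ Sum.inr γ₁ :: v',
                .single (by simpa using GStep.gg u v' γ₁ γ₃),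
                .single (by simpa using GStep.gg u v' γ₁ b)⟩
            | xgy b₁ γ' b₂ => simp at hc
            | xy b₁ b₂ => simp at hc
          · simp at hp2
      | xy x y =>
        rcases s with _ | ⟨a₁, s⟩
        · simp only [List.nil_append, List.cons.injEq] at hp
          obtain ⟨rfl, rfl⟩ := hp
          cases r' with
          | gg b₁ b₂ => simp at hc
          | xgy b₁ γ' b₂ => simp at hc
          | xy b₁ b₂ =>
            simp only [List.cons_append, List.nil_append, List.cons.injEq,
              Sum.inl.injEq] at hc
            obtain ⟨rfl, rfl, rfl⟩ := hc
            exact ⟨_, .refl, by simpa using Relation.ReflTransGen.refl⟩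
        · simp only [List.cons_append, List.cons.injEq] at hp
          obtain ⟨rfl, hp2⟩ := hp
          rcases s with _ | ⟨a₂, s⟩
          · simp only [List.nil_append, List.cons.injEq] at hp2
            obtain ⟨rfl, rfl⟩ := hp2
            cases r' with
            | gg b₁ b₂ => simp at hc
            | xgy b γ' z =>
              simp only [List.cons_append, List.nil_append, List.cons.injEq,
                Sum.inl.injEq] at hc
              obtain ⟨rfl, rfl⟩ := hc
              refine ⟨u ++ Sum.inl (m x γ₀ (m b γ' z)) :: v',
                .single ?_, .single (by simpa using GStep.xy u v' x (m b γ' z))⟩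
              have := GStep.xgy (m := m) (γ₀ := γ₀) u v' (m x γ₀ b) γ' z
              rw [assoc] at this
              simpa using this
            | xy b z =>
              simp only [List.cons_append, List.nil_append, List.cons.injEq,
                Sum.inl.injEq] at hc
              obtain ⟨rfl, rfl⟩ := hc
              refine ⟨u ++ Sum.inl (m x γ₀ (m b γ₀ z)) :: v',
                .single ?_, .single (by simpa using GStep.xy u v' x (m b γ₀ z))⟩
              have := GStep.xy (m := m) (γ₀ := γ₀) u v' (m x γ₀ b) z
              rw [assoc] at this
              simpa using this
          · simp at hp2
      | xgy x γ y =>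
        rcases s with _ | ⟨a₁, s⟩
        · simp only [List.nil_append, List.cons.injEq] at hp
          obtain ⟨rfl, rfl⟩ := hp
          cases r' with
          | gg b₁ b₂ => simp at hc
          | xgy b₁ γ' b₂ =>
            simp only [List.cons_append, List.nil_append, List.cons.injEq,
              Sum.inl.injEq, Sum.inr.injEq] at hc
            obtain ⟨rfl, rfl, rfl, rfl⟩ := hc
            exact ⟨_, .refl, by simpa using Relation.ReflTransGen.refl⟩
          | xy b₁ b₂ => simp at hc
        · simp only [List.cons_append, List.cons.injEq] at hp
          obtain ⟨rfl, hp2⟩ := hp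
          rcases s with _ | ⟨a₂, s⟩
          · simp only [List.nil_append, List.cons.injEq] at hp2
            obtain ⟨rfl, rfl⟩ := hp2
            cases r' with
            | gg b₁ b₂ => simp at hc
            | xgy b₁ γ' b₂ => simp at hc
            | xy b₁ b₂ => simp at hc
          · simp only [List.cons_append, List.cons.injEq] at hp2
            obtain ⟨rfl, hp3⟩ := hp2
            rcases s with _ | ⟨a₃, s⟩
            · simp only [List.nil_append, List.cons.injEq] at hp3
              obtain ⟨rfl, rfl⟩ := hp3
              cases r' with
              | gg b₁ b₂ => simp at hc
              | xgy b γ' z =>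
                simp only [List.cons_append, List.nil_append, List.cons.injEq,
                  Sum.inl.injEq] at hc
                obtain ⟨rfl, rfl⟩ := hc
                refine ⟨u ++ Sum.inl (m x γ (m b γ' z)) :: v',
                  .single ?_, .single (by simpa using GStep.xgy u v' x γ (m b γ' z))⟩
                have := GStep.xgy (m := m) (γ₀ := γ₀) u v' (m x γ b) γ' z
                rw [assoc] at this
                simpa using this
              | xy b z =>
                simp only [List.cons_append, List.nil_append, List.cons.injEq,
                  Sum.inl.injEq] at hc
                obtain ⟨rfl, rfl⟩ := hc
                refine ⟨u ++ Sum.inl (m x γ (m b γ₀ z)) :: v',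
                  .single ?_, .single (by simpa using GStep.xgy u v' x γ (m b γ₀ z))⟩
                have := GStep.xy (m := m) (γ₀ := γ₀) u v' (m x γ b) z
                rw [assoc] at this
                simpa using this
            · simp at hp3

lemma gstep_local_confluent
    (assoc : ∀ (a b c : S) (α β : Γ), m (m a α b) β c = m a α (m b β c))
    {w w₁ w₂ : List (S ⊕ Γ)} (h₁ : GStep m γ₀ w w₁) (h₂ : GStep m γ₀ w w₂) :
    ∃ c, Relation.ReflTransGen (GStep m γ₀) w₁ c ∧
      Relation.ReflTransGen (GStep m γ₀) w₂ c := by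
  obtain ⟨u, p, q, v, r, rfl, rfl⟩ := gstep_cases h₁
  obtain ⟨u', p', q', v', r', he, rfl⟩ := gstep_cases h₂
  rcases List.append_eq_append_iff.mp
      (show u ++ (p ++ v) = u' ++ (p' ++ v') by simpa [List.append_assoc] using he) with
    ⟨s, rfl, hs⟩ | ⟨s, rfl, hs⟩
  · exact gstep_loc_aux assoc r r' u hs
  · obtain ⟨c, h1, h2⟩ := gstep_loc_aux assoc r' r u' hs
    exact ⟨c, h2, h1⟩

lemma gstep_length {w w' : List (S ⊕ Γ)} (h : GStep m γ₀ w w') :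
    w'.length < w.length := by
  cases h <;> simp [List.length_append]

lemma gstep_confluent
    (assoc : ∀ (a b c : S) (α β : Γ), m (m a α b) β c = m a α (m b β c)) :
    ∀ w w₁ w₂ : List (S ⊕ Γ), Relation.ReflTransGen (GStep m γ₀) w w₁ →
      Relation.ReflTransGen (GStep m γ₀) w w₂ →
      ∃ c, Relation.ReflTransGen (GStep m γ₀) w₁ c ∧
        Relation.ReflTransGen (GStep m γ₀) w₂ c := by
  have key : ∀ n (w : List (S ⊕ Γ)), w.length ≤ n → ∀ w₁ w₂,
      Relation.ReflTransGen (GStep m γ₀) w w₁ →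
      Relation.ReflTransGen (GStep m γ₀) w w₂ →
      ∃ c, Relation.ReflTransGen (GStep m γ₀) w₁ c ∧
        Relation.ReflTransGen (GStep m γ₀) w₂ c := by
    intro n
    induction n with
    | zero =>
      intro w hw w₁ w₂ h₁ h₂
      rcases h₁.cases_head with rfl | ⟨a, ha, _⟩
      · exact ⟨w₂, h₂, .refl⟩
      · exact absurd (gstep_length ha) (by omega)
    | succ n ih =>
      intro w hw w₁ w₂ h₁ h₂
      rcases h₁.cases_head with rfl | ⟨a, ha, ha₁⟩
      · exact ⟨w₂, h₂, .refl⟩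
      rcases h₂.cases_head with rfl | ⟨b, hb, hb₂⟩
      · exact ⟨w₁, .refl, h₁⟩
      obtain ⟨c, hac, hbc⟩ := gstep_local_confluent assoc ha hb
      obtain ⟨d, h₁d, hcd⟩ := ih a (by have := gstep_length ha; omega) w₁ c ha₁ hac
      obtain ⟨e, h₂e, hde⟩ := ih b (by have := gstep_length hb; omega) w₂ d hb₂ (hbc.trans hcd)
      exact ⟨e, h₁d.trans hde, h₂e⟩
  intro w w₁ w₂
  exact key w.length w le_rfl w₁ w₂

end GConfluence

theorem stmt (S Γ : Type) [Nonempty S] [Nonempty Γ] (m : S → Γ → S → S)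
    (assoc : ∀ (a b c : S) (α β : Γ), m (m a α b) β c = m a α (m b β c)) (γ₀ : Γ) :
    (∀ w w₁ w₂ : List (S ⊕ Γ), GStep m γ₀ w w₁ → GStep m γ₀ w w₂ →
      ∃ w₃, Relation.ReflTransGen (GStep m γ₀) w₁ w₃ ∧ Relation.ReflTransGen (GStep m γ₀) w₂ w₃) ∧
    (∀ w w₁ w₂ : List (S ⊕ Γ), Relation.ReflTransGen (GStep m γ₀) w w₁ →
      Relation.ReflTransGen (GStep m γ₀) w w₂ →
      ∃ w₃, Relation.ReflTransGen (GStep m γ₀) w₁ w₃ ∧ Relation.ReflTransGen (GStep m γ₀) w₂ w₃) := by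
  have loc := fun w w₁ w₂ h1 h2 => gstep_local_confluent (m := m) (γ₀ := γ₀) assoc h1 h2 (w := w) (w₁ := w₁) (w₂ := w₂)
  exact ⟨loc, gstep_confluent assoc⟩
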